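/- arXiv:2202.03977 — 8 statements merged into one kernel-verified Lean document; each statement's English description precedes it below -/
import Mathlib

section
/- Let R be a commutative ring and a ∈ R. Let f, g, h, s, t ∈ R[X] be polynomials with h monic such that f ≡ g·h (mod a·R[X]) and s·g + t·h ≡ 1 (mod a·R[X]). Then there exist polynomials g*, h*, s*, t* ∈ R[X] with h* monic, deg h* = deg h, g* ≡ g (mod a·R[X]), h* ≡ h (mod a·R[X]), such that f ≡ g*·h* (mod a²·R[X]) and s*·g* + t*·h* ≡ 1 (mod a²·R[X]). -/
open Polynomial

/-!
Write `f - g h = a u` and divide `s u` by the monic `h`: `s u = h q₀ + r₀` with `deg r₀ < deg h`.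
The lifted factors are `h* = h + a r₀`, which stays monic of the same degree, and
`g* = g + a (t u + q₀ g)`; expanding `f - g* h*` leaves only products of two terms divisible by
`a`. The Bézout relation is then lifted by one Newton step: if `d = s g* + t h* - 1` is divisible
by `a`, the cofactors `(1 - d) s` and `(1 - d) t` give `1 - d²`.
-/

section LiftIdentities

variable {A : Type*} [CommRing A] {c f g h s t q r g' h' : A}

theorem sq_dvd_sub_mul_of_hensel_lift (hfac : c ∣ f - g * h) (hbez : c ∣ s * g + t * h - 1)
    (hq : c ∣ q) (hr : c ∣ r) (hdiv : s * (f - g * h) = r + h * q) :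
    c ^ 2 ∣ f - (g + (t * (f - g * h) + q * g)) * (h + r) := by
  have key : f - (g + (t * (f - g * h) + q * g)) * (h + r) =
      -((f - g * h) * (s * g + t * h - 1)) - (t * (f - g * h) + q * g) * r := by
    linear_combination g * hdiv
  rw [key, sq]
  exact dvd_sub (mul_dvd_mul hfac hbez).neg_right
    (mul_dvd_mul (dvd_add (hfac.mul_left t) (hq.mul_right g)) hr)

theorem dvd_bezout_of_dvd_sub (hbez : c ∣ s * g + t * h - 1) (hg : c ∣ g' - g)
    (hh : c ∣ h' - h) : c ∣ s * g' + t * h' - 1 := by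
  have split : s * g' + t * h' - 1 = (s * g + t * h - 1) + s * (g' - g) + t * (h' - h) := by ring
  rw [split]
  exact dvd_add (dvd_add hbez (hg.mul_left s)) (hh.mul_left t)

theorem exists_sq_dvd_bezout (hbez : c ∣ s * g + t * h - 1) :
    ∃ s' t' : A, c ^ 2 ∣ s' * g + t' * h - 1 := by
  set d := s * g + t * h - 1
  refine ⟨(1 - d) * s, (1 - d) * t, ?_⟩
  have newton : (1 - d) * s * g + (1 - d) * t * h - 1 = -(d * d) := by ring
  rw [newton, sq]
  exact (mul_dvd_mul hbez hbez).neg_right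

end LiftIdentities

namespace Polynomial.Monic

variable {R : Type*} [CommRing R] {h : R[X]}

theorem degree_C_mul_modByMonic_lt [Nontrivial R] (hh : h.Monic) (a : R) (p : R[X]) :
    (C a * (p %ₘ h)).degree < h.degree :=
  (smul_eq_C_mul a ▸ degree_smul_le a _).trans_lt (degree_modByMonic_lt p hh)

theorem add_C_mul_modByMonic (hh : h.Monic) (a : R) (p : R[X]) :
    (h + C a * (p %ₘ h)).Monic := by
  nontriviality R
  exact hh.add_of_left (hh.degree_C_mul_modByMonic_lt a p)

theorem degree_add_C_mul_modByMonic (hh : h.Monic) (a : R) (p : R[X]) :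
    (h + C a * (p %ₘ h)).degree = h.degree := by
  nontriviality R
  exact degree_add_eq_left_of_degree_lt (hh.degree_C_mul_modByMonic_lt a p)

end Polynomial.Monic

/-- Basic Hensel step: lift a factorisation `f ≡ g·h (mod a)` with Bézout
relation `s·g + t·h ≡ 1 (mod a)` to a factorisation modulo `a²`. -/
theorem hensel_step {R : Type*} [CommRing R] (a : R)
    (f g h s t : R[X]) (hmon : h.Monic)
    (hfac : ∀ i, a ∣ (f - g * h).coeff i)
    (hbez : ∀ i, a ∣ (s * g + t * h - 1).coeff i) :
    ∃ g' h' s' t' : R[X], h'.Monic ∧ h'.degree = h.degree ∧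
      (∀ i, a ∣ (g' - g).coeff i) ∧ (∀ i, a ∣ (h' - h).coeff i) ∧
      (∀ i, a ^ 2 ∣ (f - g' * h').coeff i) ∧
      (∀ i, a ^ 2 ∣ (s' * g' + t' * h' - 1).coeff i) := by
  have sq_coeff_dvd {p : R[X]} (hp : C a ^ 2 ∣ p) : ∀ i, a ^ 2 ∣ p.coeff i :=
    (C_dvd_iff_dvd_coeff _ _).1 (by rwa [C_pow])
  obtain ⟨u, hu⟩ := (C_dvd_iff_dvd_coeff a _).2 hfac
  have he : C a ∣ f - g * h := ⟨u, hu⟩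
  have hbez' := (C_dvd_iff_dvd_coeff a _).2 hbez
  set r := C a * ((s * u) %ₘ h)
  set q := C a * ((s * u) /ₘ h)
  have hdiv : s * (f - g * h) = r + h * q := by
    rw [hu]; linear_combination C a * (modByMonic_add_div (s * u) h).symm
  have hr : C a ∣ r := dvd_mul_right _ _
  have hq : C a ∣ q := dvd_mul_right _ _
  have hg : C a ∣ t * (f - g * h) + q * g := dvd_add (he.mul_left t) (hq.mul_right g)
  obtain ⟨s', t', hbez2⟩ := exists_sq_dvd_bezout (dvd_bezout_of_dvd_sub hbez'
    (g' := g + (t * (f - g * h) + q * g)) (h' := h + r)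
    (by rwa [add_sub_cancel_left]) (by rwa [add_sub_cancel_left]))
  refine ⟨_, _, s', t', hmon.add_C_mul_modByMonic a _, hmon.degree_add_C_mul_modByMonic a _,
    ?_, ?_, ?_, sq_coeff_dvd hbez2⟩
  · simpa only [add_sub_cancel_left] using (C_dvd_iff_dvd_coeff a _).1 hg
  · simpa only [add_sub_cancel_left] using (C_dvd_iff_dvd_coeff a _).1 hr
  · exact sq_coeff_dvd (sq_dvd_sub_mul_of_hensel_lift he hbez' hq hr hdiv)
end

section
/- Let R be a commutative ring, n, k, t positive integers with k ≤ n and t ≤ n, and α_1, …, α_n ∈ R with α_i − α_j a unit for all i ≠ j. Let f ∈ R[X] with deg f < k, let e ∈ R^n be a vector with at most t nonzero entries, and set y_i = f(α_i) + e_i for 1 ≤ i ≤ n. Let Q be a bivariate polynomial over R, written Q = Σ_j Q_j(X)·Y^j with Q_j ∈ R[X], such that (i) for every j with Q_j ≠ 0 one has deg Q_j + (k−1)·j < n − t, and (ii) Q(α_i, y_i) = 0 for all 1 ≤ i ≤ n. Then the univariate polynomial Q(X, f(X)) ∈ R[X] obtained by substituting Y = f(X) is the zero polynomial. -/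
open Polynomial

private lemma aux_root_zero {R : Type*} [CommRing R] {ι : Type*} [DecidableEq ι]
    (s : Finset ι) (β : ι → R)
    (hu : ∀ i ∈ s, ∀ j ∈ s, i ≠ j → IsUnit (β i - β j)) :
    ∀ p : R[X], (∀ i ∈ s, p.eval (β i) = 0) → p.degree < s.card → p = 0 := by
  induction s using Finset.induction_on with
  | empty =>
    intro p _ hd
    rw [← degree_eq_bot]
    exact Nat.WithBot.lt_zero_iff.mp (by simpa using hd)
  | @insert a s' ha ih =>
    intro p hr hd
    rcases subsingleton_or_nontrivial R with hR | hR
    · exact Subsingleton.elim _ _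
    have hroot : p.eval (β a) = 0 := hr a (Finset.mem_insert_self a s')
    have hdvd : (X - C (β a)) ∣ p := dvd_iff_isRoot.mpr hroot
    obtain ⟨q, hq⟩ := hdvd
    have hq0 : q = 0 := by
      apply ih (fun i hi j hj hij => hu i (Finset.mem_insert_of_mem hi) j
        (Finset.mem_insert_of_mem hj) hij)
      · intro i hi
        have hne : i ≠ a := by rintro rfl; exact ha hi
        have h0 := hr i (Finset.mem_insert_of_mem hi)
        rw [hq] at h0
        have hu' : IsUnit (β i - β a) := hu i (Finset.mem_insert_of_mem hi) a
          (Finset.mem_insert_self a s') hne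
        rw [eval_mul, eval_sub, eval_X, eval_C, mul_comm] at h0
        exact hu'.mul_left_eq_zero.mp h0
      · by_cases hq0 : q = 0
        · simp only [hq0, degree_zero]
          exact WithBot.bot_lt_coe _
        · have hm : (X - C (β a)).Monic := monic_X_sub_C (β a)
          have hdp : p.degree = q.degree + 1 := by
            rw [hq, mul_comm, hm.degree_mul, degree_X_sub_C]
          rw [hdp, Finset.card_insert_of_notMem ha] at hd
          rw [degree_eq_natDegree hq0] at hd ⊢
          have h2 : (q.natDegree + 1 : ℕ) < s'.card + 1 := by exact_mod_cast hd
          exact_mod_cast Nat.lt_of_succ_lt_succ h2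
    rw [hq, hq0, mul_zero]

/-- Correctness of the Sudan-type interpolation step for Reed–Solomon codes
over rings.  A bivariate polynomial `Q = Σ_j Q_j(X)·Y^j` is represented as
`Q : (R[X])[Y]`, i.e. `Q : Polynomial (Polynomial R)` with outer variable `Y`;
`Q(α, y)` is `(Q.eval (C y)).eval α` and `Q(X, f(X))` is `Q.eval f`. -/
theorem sudan_interpolation_correct {R : Type*} [CommRing R]
    (n k t : ℕ) (hn : 0 < n) (hk : 0 < k) (ht : 0 < t)
    (hkn : k ≤ n) (htn : t ≤ n)
    (α : Fin n → R)
    (hunit : ∀ i j : Fin n, i ≠ j → IsUnit (α i - α j))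
    (f : R[X]) (hdeg : f.degree < (k : ℕ))
    (e : Fin n → R) (he : {i : Fin n | e i ≠ 0}.ncard ≤ t)
    (y : Fin n → R) (hy : ∀ i, y i = f.eval (α i) + e i)
    (Q : Polynomial (Polynomial R))
    (hwdeg : ∀ j, Q.coeff j ≠ 0 → (Q.coeff j).natDegree + (k - 1) * j < n - t)
    (hQ : ∀ i : Fin n, (Q.eval (C (y i))).eval (α i) = 0) :
    Q.eval f = 0 := by
  classical
  have hfdeg : f.degree ≤ ((k - 1 : ℕ) : WithBot ℕ) := by
    rcases eq_or_ne f 0 with rfl | hf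
    · simp
    · rw [degree_eq_natDegree hf] at hdeg ⊢
      exact_mod_cast Nat.le_sub_one_of_lt (by exact_mod_cast hdeg)
  have hdegQf : (Q.eval f).degree < ((n - t : ℕ) : WithBot ℕ) := by
    rw [eval_eq_sum]
    refine lt_of_le_of_lt (degree_sum_le _ _) ?_
    rw [Finset.sup_lt_iff (WithBot.bot_lt_coe _)]
    intro j hj
    have hj0 : Q.coeff j ≠ 0 := mem_support_iff.mp hj
    have h1 : (Q.coeff j * f ^ j).degree ≤
        (((Q.coeff j).natDegree + (k - 1) * j : ℕ) : WithBot ℕ) := by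
      calc (Q.coeff j * f ^ j).degree
          ≤ (Q.coeff j).degree + (f ^ j).degree := degree_mul_le _ _
        _ ≤ ((Q.coeff j).natDegree : WithBot ℕ) + j • f.degree :=
            add_le_add degree_le_natDegree (degree_pow_le _ _)
        _ ≤ ((Q.coeff j).natDegree : WithBot ℕ) + j • ((k - 1 : ℕ) : WithBot ℕ) :=
            add_le_add le_rfl (nsmul_le_nsmul_right hfdeg j)
        _ = (((Q.coeff j).natDegree + (k - 1) * j : ℕ) : WithBot ℕ) := by
            rw [nsmul_eq_mul]; push_cast; ring
    exact lt_of_le_of_lt h1 (by exact_mod_cast hwdeg j hj0)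
  set S : Finset (Fin n) := Finset.univ.filter (fun i => e i = 0) with hS
  have hcard : (n - t : ℕ) ≤ S.card := by
    have h1 : {i : Fin n | e i ≠ 0}.ncard = (Finset.univ.filter (fun i => e i ≠ 0)).card := by
      rw [Set.ncard_eq_toFinset_card']
      congr 1
      ext i
      simp
    have h2 : S.card + (Finset.univ.filter (fun i => e i ≠ 0)).card = n := by
      rw [hS, Finset.card_filter_add_card_filter_not]
      simp
    omega
  have hroots : ∀ i ∈ S, (Q.eval f).eval (α i) = 0 := by
    intro i hi
    have hei : e i = 0 := by simpa [hS] using hi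
    have hyi : y i = f.eval (α i) := by rw [hy i, hei, add_zero]
    have key : ∀ c : R[X], (Q.eval c).eval (α i) =
        Q.eval₂ ((evalRingHom (α i)).comp (RingHom.id _)) (c.eval (α i)) := by
      intro c
      exact hom_eval₂ (p := Q) (f := RingHom.id R[X]) (g := evalRingHom (α i)) c
    have h3 := key f
    have h4 := key (C (y i))
    rw [eval_C] at h4
    rw [h3, ← hyi, ← h4]
    exact hQ i
  refine aux_root_zero S α (fun i _ j _ hij => hunit i j hij) _ hroots ?_
  exact lt_of_lt_of_le hdegQf (by exact_mod_cast hcard)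
end

section
/- Let p be a prime, r ≥ 1, and let α_1, …, α_k ∈ ℤ/p^rℤ be elements whose images under the reduction map ℤ/p^rℤ → ℤ/pℤ are pairwise distinct. Let e ≥ 1 and let h ∈ (ℤ/p^rℤ)[X] be a polynomial with deg h < k·e such that (X − α_i)^e divides h for all i = 1, …, k. Then h = 0. -/
open Polynomial

lemma zmod_unit_of_cast_ne_zero (p : ℕ) (hp : p.Prime) (r : ℕ) (hr : 0 < r)
    (x : ZMod (p ^ r)) (hx : ZMod.castHom (dvd_pow_self p hr.ne') (ZMod p) x ≠ 0) :
    IsUnit x := by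
  have : NeZero (p ^ r) := ⟨pow_ne_zero _ hp.pos.ne'⟩
  have hval : ((x.val : ZMod p)) ≠ 0 := by
    rwa [ZMod.castHom_apply, ← ZMod.natCast_val] at hx
  have hpd : ¬ p ∣ x.val := fun hd =>
    hval ((ZMod.natCast_eq_zero_iff _ _).mpr hd)
  have : IsUnit ((x.val : ℕ) : ZMod (p ^ r)) := by
    rw [ZMod.isUnit_iff_coprime]
    exact Nat.Coprime.pow_right r ((hp.coprime_iff_not_dvd).mpr hpd).symm
  rwa [ZMod.natCast_val, ZMod.cast_id] at this

/-- Multiplicity version of the root-counting lemma over `ℤ/p^rℤ`: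
a polynomial of degree `< k·e` divisible by `(X - α_i)^e` for `k` points
with pairwise distinct residues modulo `p` is zero. -/
theorem eq_zero_of_multiple_roots_zmod (p : ℕ) (hp : p.Prime)
    (r : ℕ) (hr : 0 < r) (k : ℕ) (α : Fin k → ZMod (p ^ r))
    (hdist : ∀ i j : Fin k, i ≠ j →
      ZMod.castHom (dvd_pow_self p hr.ne') (ZMod p) (α i) ≠
        ZMod.castHom (dvd_pow_self p hr.ne') (ZMod p) (α j))
    (e : ℕ) (he : 1 ≤ e)
    (h : Polynomial (ZMod (p ^ r))) (hdeg : h.degree < (k * e : ℕ))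
    (hdvd : ∀ i : Fin k, (X - C (α i)) ^ e ∣ h) :
    h = 0 := by
  haveI : Fact (1 < p ^ r) := ⟨Nat.one_lt_pow hr.ne' hp.one_lt⟩
  set g : Polynomial (ZMod (p ^ r)) := ∏ i : Fin k, (X - C (α i)) ^ e with hg
  have hmon : g.Monic := monic_prod_of_monic _ _ fun i _ => (monic_X_sub_C _).pow e
  have hgdvd : g ∣ h := by
    apply Fintype.prod_dvd_of_coprime
    · intro i j hij
      apply IsCoprime.pow
      apply isCoprime_X_sub_C_of_isUnit_sub
      apply zmod_unit_of_cast_ne_zero p hp r hr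
      rw [map_sub, sub_ne_zero]
      exact hdist i j hij
    · exact hdvd
  have hgdeg : g.natDegree = k * e := by
    rw [hg, natDegree_prod_of_monic _ _ fun i _ => (monic_X_sub_C _).pow e]
    rw [Finset.sum_congr rfl fun i _ => by
      rw [(monic_X_sub_C (α i)).natDegree_pow, natDegree_X_sub_C, mul_one]]
    simp [mul_comm]
  by_contra hne
  obtain ⟨q, hq⟩ := hgdvd
  have hq0 : q ≠ 0 := by rintro rfl; rw [mul_zero] at hq; exact hne hq
  rw [mul_comm] at hq
  rw [hq, hmon.degree_mul, degree_eq_natDegree hmon.ne_zero, hgdeg] at hdeg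
  exact absurd hdeg (not_lt.mpr
    (le_add_of_nonneg_left (Polynomial.zero_le_degree_iff.mpr hq0)))
end

section
/- Let R be a commutative ring, n, k, t, e positive integers with k ≤ n and t ≤ n, and α_1, …, α_n ∈ R with α_i − α_j a unit for all i ≠ j. Let f ∈ R[X] with deg f < k, let e' ∈ R^n be a vector with at most t nonzero entries, and set y_i = f(α_i) + e'_i for 1 ≤ i ≤ n. Let Q be a bivariate polynomial over R, written Q = Σ_j Q_j(X)·Y^j with Q_j ∈ R[X], such that (i) for every j with Q_j ≠ 0 one has deg Q_j + (k−1)·j < e·(n − t), and (ii) for every 1 ≤ i ≤ n, the shifted polynomial Q(X + α_i, Y + y_i) has zero coefficient at every monomial X^a Y^b with a + b < e. Then the univariate polynomial Q(X, f(X)) ∈ R[X] obtained by substituting Y = f(X) is the zero polynomial. -/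
open Polynomial

lemma eq_zero_of_monic_dvd_of_degree_lt {R : Type*} [CommRing R] {p q : R[X]}
    (hm : p.Monic) (hdvd : p ∣ q) (hlt : q.degree < p.degree) : q = 0 := by
  obtain ⟨c, rfl⟩ := hdvd
  by_cases hc : c = 0
  · simp [hc]
  · exfalso
    rw [mul_comm, hm.degree_mul] at hlt
    have := Polynomial.zero_le_degree_iff.mpr hc
    have h0 : p.degree ≤ c.degree + p.degree := le_add_of_nonneg_left this
    exact absurd (lt_of_le_of_lt h0 hlt) (lt_irrefl _)

/-- The bivariate polynomial `Q(X + α, Y + c)`, where a bivariate polynomial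
is represented as `Q : Polynomial (Polynomial R)` with outer variable `Y` and
coefficients in `R[X]`. -/
noncomputable def bivShift {R : Type*} [CommRing R] (α c : R)
    (Q : Polynomial (Polynomial R)) : Polynomial (Polynomial R) :=
  (Q.map (Polynomial.aeval (X + C α) : R[X] →ₐ[R] R[X]).toRingHom).comp
    (X + C (C c))

/-- Correctness of the Guruswami–Sudan interpolation step with
multiplicities for Reed–Solomon codes over rings. -/
theorem guruswami_sudan_interpolation_correct {R : Type*} [CommRing R]
    (n k t e : ℕ) (hn : 0 < n) (hk : 0 < k) (ht : 0 < t) (he : 0 < e)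
    (hkn : k ≤ n) (htn : t ≤ n)
    (α : Fin n → R)
    (hunit : ∀ i j : Fin n, i ≠ j → IsUnit (α i - α j))
    (f : R[X]) (hdeg : f.degree < (k : ℕ))
    (e' : Fin n → R) (he' : {i : Fin n | e' i ≠ 0}.ncard ≤ t)
    (y : Fin n → R) (hy : ∀ i, y i = f.eval (α i) + e' i)
    (Q : Polynomial (Polynomial R))
    (hwdeg : ∀ j, Q.coeff j ≠ 0 →
      (Q.coeff j).natDegree + (k - 1) * j < e * (n - t))
    (hQ : ∀ i : Fin n, ∀ a b : ℕ, a + b < e →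
      ((bivShift (α i) (y i) Q).coeff b).coeff a = 0) :
    Q.eval f = 0 := by
  classical
  set h : R[X] := Q.eval f with hh
  set S : Finset (Fin n) := Finset.univ.filter (fun i => e' i = 0) with hS
  -- cardinality of S
  have hScard : n - t ≤ S.card := by
    have h1 : {i : Fin n | e' i ≠ 0}.ncard
        = (Finset.univ.filter (fun i => ¬ e' i = 0)).card := by
      rw [Set.ncard_eq_toFinset_card']
      congr 1
      ext i
      simp
    have h2 : S.card + (Finset.univ.filter (fun i => ¬ e' i = 0)).card = n := by
      rw [hS, Finset.card_filter_add_card_filter_not]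
      simp
    omega
  -- key divisibility
  have key : ∀ i ∈ S, (X - C (α i)) ^ e ∣ h := by
    intro i hi
    have hei : e' i = 0 := by simpa [hS] using hi
    have hyi : y i = f.eval (α i) := by rw [hy, hei, add_zero]
    set g : R[X] := f.comp (X + C (α i)) - C (y i) with hg
    have hXg : (X : R[X]) ∣ g := by
      rw [Polynomial.X_dvd_iff]
      simp [hg, Polynomial.coeff_zero_eq_eval_zero, hyi]
    have hcomp : h.comp (X + C (α i)) = (bivShift (α i) (y i) Q).eval g := by
      unfold bivShift
      rw [Polynomial.eval_comp]
      have hgy : Polynomial.eval g (X + C (C (y i))) = f.comp (X + C (α i)) := by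
        simp [hg]
      rw [hgy, Polynomial.eval_map]
      have hσf : (Polynomial.aeval (X + C (α i)) : R[X] →ₐ[R] R[X]).toRingHom f
          = f.comp (X + C (α i)) := rfl
      rw [← hσf, Polynomial.eval₂_at_apply]
      rfl
    have hdvdX : (X : R[X]) ^ e ∣ (bivShift (α i) (y i) Q).eval g := by
      rw [Polynomial.eval_eq_sum, Polynomial.sum]
      apply Finset.dvd_sum
      intro b hb
      rcases le_or_gt e b with hbe | hbe
      · exact Dvd.dvd.mul_left
          ((pow_dvd_pow _ hbe).trans (pow_dvd_pow_of_dvd hXg b)) _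
      · have h1 : (X : R[X]) ^ (e - b) ∣ (bivShift (α i) (y i) Q).coeff b := by
          rw [Polynomial.X_pow_dvd_iff]
          intro d hd
          exact hQ i d b (by omega)
        have h2 : (X : R[X]) ^ b ∣ g ^ b := pow_dvd_pow_of_dvd hXg b
        have h3 := mul_dvd_mul h1 h2
        rwa [← pow_add, Nat.sub_add_cancel hbe.le] at h3
    rw [← hcomp] at hdvdX
    have := map_dvd (Polynomial.aeval (X - C (α i)) : R[X] →ₐ[R] R[X]) hdvdX
    have haeval : ∀ p : R[X], (Polynomial.aeval (X - C (α i)) : R[X] →ₐ[R] R[X]) p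
        = p.comp (X - C (α i)) := fun p => rfl
    rw [map_pow, haeval, haeval, Polynomial.X_comp, Polynomial.comp_assoc] at this
    simpa [Polynomial.add_comp, Polynomial.X_comp, Polynomial.C_comp] using this
  -- coprimality and product divides
  have hprod : (∏ i ∈ S, (X - C (α i)) ^ e) ∣ h := by
    apply Finset.prod_dvd_of_coprime _ key
    intro i hi j hj hij
    exact (Polynomial.isCoprime_X_sub_C_of_isUnit_sub (hunit i j hij)).pow
  -- degree bounds
  have hdegf : f.degree ≤ ((k - 1 : ℕ) : WithBot ℕ) := by
    rcases eq_or_ne f 0 with rfl | hf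
    · simp
    · rw [Polynomial.degree_eq_natDegree hf] at hdeg ⊢
      exact_mod_cast by
        have : f.natDegree < k := by exact_mod_cast hdeg
        omega
  have hdegh : h.degree < ((e * (n - t) : ℕ) : WithBot ℕ) := by
    rw [hh, Polynomial.eval_eq_sum, Polynomial.sum]
    apply lt_of_le_of_lt (Polynomial.degree_sum_le _ _)
    rw [Finset.sup_lt_iff (by exact_mod_cast WithBot.bot_lt_coe _)]
    intro j hj
    have hQj : Q.coeff j ≠ 0 := Polynomial.mem_support_iff.mp hj
    calc (Q.coeff j * f ^ j).degree
        ≤ (Q.coeff j).degree + (f ^ j).degree := Polynomial.degree_mul_le _ _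
      _ ≤ ((Q.coeff j).natDegree : WithBot ℕ) + j • f.degree := by
          gcongr
          · exact Polynomial.degree_le_natDegree
          · exact Polynomial.degree_pow_le _ _
      _ ≤ ((Q.coeff j).natDegree : WithBot ℕ) + j • ((k - 1 : ℕ) : WithBot ℕ) := by
          gcongr
      _ = (((Q.coeff j).natDegree + (k - 1) * j : ℕ) : WithBot ℕ) := by
          rw [nsmul_eq_mul]
          push_cast
          ring
      _ < ((e * (n - t) : ℕ) : WithBot ℕ) := by
          exact_mod_cast hwdeg j hQj
  -- the product is monic of large degree
  have hmono : (∏ i ∈ S, (X - C (α i)) ^ e).Monic :=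
    Polynomial.monic_prod_of_monic _ _ (fun i _ => (Polynomial.monic_X_sub_C _).pow e)
  rcases subsingleton_or_nontrivial R with hsub | hnt
  · exact Subsingleton.elim _ _
  have hdegp : (∏ i ∈ S, (X - C (α i)) ^ e).natDegree = e * S.card := by
    rw [Polynomial.natDegree_prod_of_monic _ _
      (fun i _ => (Polynomial.monic_X_sub_C _).pow e)]
    have : ∀ i : Fin n, ((X - C (α i)) ^ e).natDegree = e := by
      intro i
      rw [(Polynomial.monic_X_sub_C _).natDegree_pow, Polynomial.natDegree_X_sub_C, mul_one]
    rw [Finset.sum_congr rfl (fun i _ => this i), Finset.sum_const, smul_eq_mul, mul_comm]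
  have hfinal : h = 0 := by
    apply eq_zero_of_monic_dvd_of_degree_lt hmono hprod
    rw [Polynomial.degree_eq_natDegree hmono.ne_zero]
    calc h.degree < ((e * (n - t) : ℕ) : WithBot ℕ) := hdegh
      _ ≤ ((e * S.card : ℕ) : WithBot ℕ) := by
          exact_mod_cast Nat.mul_le_mul_left e (by omega)
      _ = _ := by rw [hdegp]
  exact hfinal
end

section
/- Let R be a commutative ring, α, c ∈ R, e a positive integer, and Q a bivariate polynomial over R such that every coefficient of X^a Y^b with a + b < e in the shifted polynomial Q(X + α, Y + c) vanishes. Then for every f ∈ R[X] with f(α) = c, the polynomial (X − α)^e divides the univariate polynomial Q(X, f(X)) ∈ R[X] obtained by substituting Y = f(X). -/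
open Polynomial

/-- If `Q` vanishes at `(α, c)` with multiplicity `e` and `f(α) = c`, then
`(X - α)^e` divides `Q(X, f(X))`. -/
theorem pow_dvd_eval_of_multiplicity {R : Type*} [CommRing R]
    (α c : R) (e : ℕ) (he : 0 < e) (Q : Polynomial (Polynomial R))
    (hmult : ∀ a b : ℕ, a + b < e → ((bivShift α c Q).coeff b).coeff a = 0)
    (f : R[X]) (hf : f.eval α = c) :
    (X - C α) ^ e ∣ Q.eval f := by
  set σ : R[X] →+* R[X] := (Polynomial.aeval (X + C α) : R[X] →ₐ[R] R[X]).toRingHom with hσdef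
  have hσ : ∀ p : R[X], σ p = p.comp (X + C α) := fun p => by
    simp [hσdef, Polynomial.aeval_def, Polynomial.comp, Polynomial.algebraMap_eq]
  set g : R[X] := σ f - C c with hg
  have hXg : X ∣ g := by
    rw [Polynomial.X_dvd_iff]
    simp [hg, hσ, coeff_zero_eq_eval_zero, eval_comp, hf]
  -- X^e divides (bivShift α c Q).eval g
  have hdvd : (X : R[X]) ^ e ∣ (bivShift α c Q).eval g := by
    rw [Polynomial.eval_eq_sum]
    apply Finset.dvd_sum
    intro b _
    rcases lt_or_ge b e with hb | hb
    · have h1 : (X : R[X]) ^ (e - b) ∣ (bivShift α c Q).coeff b := by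
        rw [Polynomial.X_pow_dvd_iff]
        intro d hd
        exact hmult d b (by omega)
      have h2 : (X : R[X]) ^ b ∣ g ^ b := pow_dvd_pow_of_dvd hXg b
      have : (X : R[X]) ^ e = X ^ (e - b) * X ^ b := by
        rw [← pow_add]; congr 1; omega
      rw [this]
      exact mul_dvd_mul h1 h2
    · exact dvd_mul_of_dvd_right
        ((pow_dvd_pow X hb).trans (pow_dvd_pow_of_dvd hXg b)) _
  -- rewrite the eval of the shift
  have hkey : (bivShift α c Q).eval g = σ (Q.eval f) := by
    rw [bivShift, Polynomial.eval_comp, Polynomial.eval_map]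
    have : (X + C (C c) : Polynomial R[X]).eval g = σ f := by
      simp [hg]
    rw [this, Polynomial.eval₂_hom]
  rw [hkey] at hdvd
  -- transfer back using composition with X - C α
  have hτ := map_dvd (Polynomial.aeval (X - C α) : R[X] →ₐ[R] R[X]) hdvd
  have hτall : ∀ p : R[X], (Polynomial.aeval (X - C α) : R[X] →ₐ[R] R[X]) p
      = p.comp (X - C α) := fun p => by
    simp [Polynomial.aeval_def, Polynomial.comp, Polynomial.algebraMap_eq]
  rw [map_pow, hτall, hτall, X_comp] at hτ
  have hback : (σ (Q.eval f)).comp (X - C α) = Q.eval f := by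
    rw [hσ, Polynomial.comp_assoc]
    simp
  rwa [hback] at hτ
end

section
/- Let R be a finite nontrivial commutative ring, let (x_1, y_1), …, (x_n, y_n) ∈ R², let e be a positive integer, and let S be a finite set of pairs of natural numbers with |S| > n·e·(e+1)/2. Then there exists a nonzero bivariate polynomial Q over R, all of whose monomials X^i Y^j satisfy (i, j) ∈ S, such that for every 1 ≤ i ≤ n, every coefficient of X^a Y^b with a + b < e in the shifted polynomial Q(X + x_i, Y + y_i) vanishes. -/
/-!
The vanishing conditions at the `n` points form an additive map from the polynomials supported
on `S` to `R ^ (n · e(e+1)/2)`, one coordinate per point and per monomial `X^a Y^b` with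
`a + b < e`. The domain has `|R| ^ |S|` elements, strictly more than the codomain, so two
distinct polynomials have the same image and their difference is the required `Q`. (Over a
general finite ring there is no rank argument, but this counting needs none.)
-/

open Polynomial

open Finset

theorem AddMonoidHom.exists_ne_zero_apply_eq_zero_of_card_lt {M N : Type*} [AddGroup M]
    [AddGroup N] [Fintype M] [Fintype N] (φ : M →+ N)
    (h : Fintype.card N < Fintype.card M) : ∃ m, m ≠ 0 ∧ φ m = 0 := by
  obtain ⟨a, b, hab, hφ⟩ := Fintype.exists_ne_map_eq_of_card_lt φ h
  exact ⟨a - b, sub_ne_zero.2 hab, by rw [map_sub, hφ, sub_self]⟩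

def triangle (e : ℕ) : Finset (ℕ × ℕ) := (range e).biUnion antidiagonal

theorem mem_triangle {e : ℕ} {p : ℕ × ℕ} : p ∈ triangle e ↔ p.1 + p.2 < e := by
  simp [triangle]

theorem card_triangle_mul_two (e : ℕ) : #(triangle e) * 2 = e * (e + 1) := by
  have hdisj : (range e : Set ℕ).PairwiseDisjoint antidiagonal := fun i _ j _ hij =>
    disjoint_left.2 fun p hi hj => hij ((mem_antidiagonal.1 hi).symm.trans (mem_antidiagonal.1 hj))
  rw [triangle, card_biUnion hdisj]
  simp only [Finset.Nat.card_antidiagonal]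
  have hgauss := sum_range_id_mul_two (e + 1)
  rw [sum_range_succ'] at hgauss
  simpa [mul_comm] using hgauss

section CoeffVector

variable {R : Type*} [Semiring R] (S : Finset (ℕ × ℕ))

noncomputable def ofCoeffs : (S → R) →+ R[X][X] where
  toFun f := ∑ s : S, monomial s.1.2 (monomial s.1.1 (f s))
  map_zero' := by simp
  map_add' f g := by simp [sum_add_distrib]

theorem ofCoeffs_apply (f : S → R) :
    ofCoeffs S f = ∑ s : S, monomial s.1.2 (monomial s.1.1 (f s)) :=
  rfl

theorem coeff_coeff_ofCoeffs (f : S → R) (i j : ℕ) :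
    ((ofCoeffs S f).coeff j).coeff i = ∑ s : S, if s.1 = (i, j) then f s else 0 := by
  simp only [ofCoeffs_apply, finsetSum_coeff, coeff_monomial]
  refine sum_congr rfl fun ⟨⟨a, b⟩, _⟩ _ => ?_
  by_cases hb : b = j <;> by_cases ha : a = i <;> simp [ha, hb, coeff_monomial]

theorem coeff_coeff_ofCoeffs_of_mem (f : S → R) (s : S) :
    ((ofCoeffs S f).coeff s.1.2).coeff s.1.1 = f s := by
  rw [coeff_coeff_ofCoeffs, sum_eq_single s]
  · simp
  · exact fun t _ hts => if_neg fun h => hts (Subtype.ext h)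
  · simp

theorem coeff_coeff_ofCoeffs_of_notMem (f : S → R) {i j : ℕ} (hij : (i, j) ∉ S) :
    ((ofCoeffs S f).coeff j).coeff i = 0 := by
  rw [coeff_coeff_ofCoeffs]
  exact sum_eq_zero fun s _ => if_neg fun h : s.1 = (i, j) => hij (h ▸ s.2)

theorem ofCoeffs_ne_zero {f : S → R} (hf : f ≠ 0) : ofCoeffs S f ≠ 0 := by
  obtain ⟨s, hs⟩ := Function.ne_iff.1 hf
  exact fun h0 => hs (by rw [← coeff_coeff_ofCoeffs_of_mem S f s, h0]; rfl)

end CoeffVector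

section VanishingConditions

variable {R : Type*} [CommRing R]

theorem bivShift_add (α c : R) (Q Q' : R[X][X]) :
    bivShift α c (Q + Q') = bivShift α c Q + bivShift α c Q' := by
  simp [bivShift, Polynomial.map_add, add_comp]

noncomputable def vanishingConditions {ι : Type*} (x y : ι → R) (T : Finset (ℕ × ℕ)) :
    R[X][X] →+ (ι × T → R) :=
  AddMonoidHom.mk' (fun Q q => ((bivShift (x q.1) (y q.1) Q).coeff q.2.1.2).coeff q.2.1.1)
    fun Q Q' => by ext; simp [bivShift_add]

end VanishingConditions

theorem exists_interpolation_polynomial_general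
    {R : Type*} [CommRing R] [Fintype R] [Nontrivial R]
    (n : ℕ) (x y : Fin n → R) (e : ℕ)
    (S : Finset (ℕ × ℕ)) (hS : n * e * (e + 1) / 2 < S.card) :
    ∃ Q : Polynomial (Polynomial R), Q ≠ 0 ∧
      (∀ i j : ℕ, (Q.coeff j).coeff i ≠ 0 → (i, j) ∈ S) ∧
      (∀ l : Fin n, ∀ a b : ℕ, a + b < e →
        ((bivShift (x l) (y l) Q).coeff b).coeff a = 0) := by
  have hconditions : n * #(triangle e) < #S := by
    rwa [← Nat.mul_div_cancel (n * _) two_pos, mul_assoc, card_triangle_mul_two, ← mul_assoc]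
  have hcard : Fintype.card (Fin n × triangle e → R) < Fintype.card (S → R) := by
    simp only [Fintype.card_fun, Fintype.card_prod, Fintype.card_fin, Fintype.card_coe]
    exact Nat.pow_lt_pow_right Fintype.one_lt_card hconditions
  obtain ⟨f, hf, hvanish⟩ := ((vanishingConditions x y (triangle e)).comp
    (ofCoeffs S)).exists_ne_zero_apply_eq_zero_of_card_lt hcard
  exact ⟨ofCoeffs S f, ofCoeffs_ne_zero S hf,
    fun i j => not_imp_comm.1 (coeff_coeff_ofCoeffs_of_notMem S f),
    fun l a b hab => congrFun hvanish (l, ⟨(a, b), mem_triangle.2 hab⟩)⟩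

/-- Existence of a nonzero interpolation polynomial with prescribed monomial
support `S` vanishing with multiplicity `e` at `n` given points, provided
`|S| > n·e·(e+1)/2`. -/
theorem exists_interpolation_polynomial
    {R : Type*} [CommRing R] [Fintype R] [Nontrivial R]
    (n : ℕ) (x y : Fin n → R) (e : ℕ) (he : 0 < e)
    (S : Finset (ℕ × ℕ)) (hS : n * e * (e + 1) / 2 < S.card) :
    ∃ Q : Polynomial (Polynomial R), Q ≠ 0 ∧
      (∀ i j : ℕ, (Q.coeff j).coeff i ≠ 0 → (i, j) ∈ S) ∧
      (∀ l : Fin n, ∀ a b : ℕ, a + b < e →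
        ((bivShift (x l) (y l) Q).coeff b).coeff a = 0) :=
  exists_interpolation_polynomial_general n x y e S hS
end

section
/- Let R be a commutative ring, U, f₁, g₁, f₂, g₂ ∈ R[Z] and k a natural number such that Z^k divides U·f₁ − g₁ and Z^k divides U·f₂ − g₂. Let ζ₁ and ζ₂ denote the coefficients of Z^k in U·f₁ − g₁ and U·f₂ − g₂ respectively, and suppose ζ₁ = q·ζ₂ for some q ∈ R. Then Z^(k+1) divides U·(f₁ − q·f₂) − (g₁ − q·g₂). -/
open Polynomial

/-- Correctness of the update step of the Byrne–Fitzpatrick algorithm: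
if the discrepancy of one order-`k` solution is a multiple of the
discrepancy of another, the corresponding combination is an order-`(k+1)`
solution of the key equation. -/
theorem byrne_fitzpatrick_update {R : Type*} [CommRing R]
    (U f₁ g₁ f₂ g₂ : R[X]) (k : ℕ)
    (h₁ : X ^ k ∣ U * f₁ - g₁)
    (h₂ : X ^ k ∣ U * f₂ - g₂)
    (q : R) (hq : (U * f₁ - g₁).coeff k = q * (U * f₂ - g₂).coeff k) :
    X ^ (k + 1) ∣ U * (f₁ - C q * f₂) - (g₁ - C q * g₂) := by
  have key : U * (f₁ - C q * f₂) - (g₁ - C q * g₂)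
      = (U * f₁ - g₁) - C q * (U * f₂ - g₂) := by ring
  rw [key, X_pow_dvd_iff]
  rw [X_pow_dvd_iff] at h₁ h₂
  intro d hd
  rcases lt_or_eq_of_le (Nat.lt_succ_iff.mp hd) with h | h
  · simp [h₁ d h, h₂ d h]
  · subst h
    simp [hq, h₂]
end

section
/- Let R be a finite nontrivial commutative ring, let h₁, h₂ ∈ R[Z], and let ℓ, d₁, d₂ be natural numbers with d₁ + d₂ + 1 ≥ ℓ. Then there exist polynomials a, b ∈ R[Z], not both zero, with deg a ≤ d₁ and deg b ≤ d₂, such that Z^ℓ divides a·h₁ − b·h₂. -/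
open Polynomial

lemma natDegree_le_of_mem_degreeLT {R : Type*} [CommRing R] {p : R[X]} {d : ℕ}
    (h : p ∈ Polynomial.degreeLT R (d + 1)) : p.natDegree ≤ d := by
  rw [Polynomial.mem_degreeLT] at h
  by_cases hp : p = 0
  · simp [hp]
  · have := (Polynomial.natDegree_lt_iff_degree_lt hp).2 (by exact_mod_cast h)
    omega

/-- Existence of a nonzero low-degree solution of the congruence
`a·h₁ ≡ b·h₂ (mod Z^ℓ)` over a finite nontrivial commutative ring. -/
theorem exists_low_degree_pade_solution
    {R : Type*} [CommRing R] [Fintype R] [Nontrivial R]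
    (h₁ h₂ : R[X]) (ℓ d₁ d₂ : ℕ) (hd : ℓ ≤ d₁ + d₂ + 1) :
    ∃ a b : R[X], ¬(a = 0 ∧ b = 0) ∧
      a.natDegree ≤ d₁ ∧ b.natDegree ≤ d₂ ∧
      X ^ ℓ ∣ a * h₁ - b * h₂ := by
  classical
  haveI : ∀ n : ℕ, Fintype (Polynomial.degreeLT R n) := fun n =>
    Fintype.ofEquiv (Fin n → R) (Polynomial.degreeLTEquiv R n).toEquiv.symm
  have hcard : ∀ n : ℕ, Fintype.card (Polynomial.degreeLT R n) = Fintype.card R ^ n :=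
    fun n => by
      rw [Fintype.card_congr (Polynomial.degreeLTEquiv R n).toEquiv]
      simp [Fintype.card_fun]
  set φ : Polynomial.degreeLT R (d₁ + 1) × Polynomial.degreeLT R (d₂ + 1) → (Fin ℓ → R) :=
    fun p i => ((p.1 : R[X]) * h₁ - (p.2 : R[X]) * h₂).coeff i with hφ
  have hlt : Fintype.card (Fin ℓ → R) <
      Fintype.card (Polynomial.degreeLT R (d₁ + 1) × Polynomial.degreeLT R (d₂ + 1)) := by
    rw [Fintype.card_prod, hcard, hcard, Fintype.card_fun, Fintype.card_fin,
      ← pow_add]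
    exact Nat.pow_lt_pow_right Fintype.one_lt_card (by omega)
  obtain ⟨p, q, hpq, heq⟩ := Fintype.exists_ne_map_eq_of_card_lt φ hlt
  refine ⟨(p.1 : R[X]) - q.1, (p.2 : R[X]) - q.2, ?_, ?_, ?_, ?_⟩
  · rintro ⟨ha, hb⟩
    apply hpq
    have h1 : p.1 = q.1 := Subtype.ext (sub_eq_zero.1 ha)
    have h2 : p.2 = q.2 := Subtype.ext (sub_eq_zero.1 hb)
    exact Prod.ext h1 h2
  · exact natDegree_le_of_mem_degreeLT (sub_mem p.1.2 q.1.2)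
  · exact natDegree_le_of_mem_degreeLT (sub_mem p.2.2 q.2.2)
  · rw [Polynomial.X_pow_dvd_iff]
    intro i hi
    have h0 : φ p ⟨i, hi⟩ = φ q ⟨i, hi⟩ := congrFun heq _
    simp only [hφ] at h0
    have : ((p.1 : R[X]) - q.1) * h₁ - ((p.2 : R[X]) - q.2) * h₂ =
        ((p.1 : R[X]) * h₁ - (p.2 : R[X]) * h₂) -
        ((q.1 : R[X]) * h₁ - (q.2 : R[X]) * h₂) := by ring
    rw [this, Polynomial.coeff_sub, h0, sub_self]
end
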